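/- arXiv:2502.02803 — 2 statements merged into one kernel-verified Lean document; each statement's English description precedes it below -/
import Mathlib

section
/- Let P(x,y) = a_g(x)·y^g + a_{g−1}(x)·y^{g−1} + ⋯ + a_0(x) be a polynomial in two variables with complex coefficients, with a_g ≠ 0 and g ≥ 1, which does not vanish at any point (z,w) with |z| = |w| = 1. Then lim_{n→∞} c(P(x,x^n)) = (1/g) ∫_0^1 ∫_0^1 (∂P/∂y)(e^{2πit}, e^{2πis})·e^{2πis} / P(e^{2πit}, e^{2πis}) dt ds, where for each sufficiently large n, P(x,x^n) is the univariate polynomial obtained by substituting y = x^n (its degree is deg(a_g) + n·g). -/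
/-!
Write `Q_n = P(x, x^n)` and `e(t) = exp(2πit)`. By the argument principle, `N(Q_n)` is the
integral of `e(t) Q_n'(e(t)) / Q_n(e(t))` over `[0, 1]`, and the chain rule
`x Q_n' = (x ∂ₓP)(x, xⁿ) + n (y ∂ᵧP)(x, xⁿ)` splits this into
`∫ F₁(t, nt) dt + n ∫ F(t, nt) dt` with `F₁, F` continuous on `ℝ²` and `1`-periodic in the
second variable. The line `t ↦ (t, nt)` equidistributes on the torus, so both integrals converge
to the corresponding double integrals; since `deg Q_n = deg a_g + n g` for large `n`, dividing by
the degree leaves `(1/g) ∬ F`.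
-/

open Polynomial Real Complex Filter MeasureTheory

open Set Finset
open scoped Topology FourierTransform Polynomial.Bivariate

section Equidistribution

variable {E : Type*} [NormedAddCommGroup E] [NormedSpace ℝ E]

theorem norm_sum_smul_sub_integral_le [CompleteSpace E] {h : ℝ → E} {n : ℕ} {ε : ℝ}
    (hn : n ≠ 0) (hint : IntervalIntegrable h volume 0 1)
    (hh : ∀ x ∈ Icc (0 : ℝ) 1, ∀ y ∈ Icc (0 : ℝ) 1, |x - y| ≤ (n : ℝ)⁻¹ → ‖h x - h y‖ ≤ ε)
    {x : ℕ → ℝ} (hx : ∀ j < n, x j ∈ Icc (j / n : ℝ) ((j + 1) / n)) :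
    ‖∑ j ∈ range n, (n : ℝ)⁻¹ • h (x j) - ∫ t in 0..1, h t‖ ≤ ε := by
  have hn' : (0 : ℝ) < n := by positivity
  set a : ℕ → ℝ := fun j => j / n with ha
  have ha_succ : ∀ j, a (j + 1) - a j = (n : ℝ)⁻¹ := fun j => by
    simp only [ha]; push_cast; field_simp; ring
  have ha_le : ∀ j, a j ≤ a (j + 1) := fun j => by linarith [ha_succ j, inv_pos.2 hn']
  have ha_mem : ∀ j < n, Icc (a j) (a (j + 1)) ⊆ Icc 0 1 := fun j hj =>
    Icc_subset_Icc (by positivity) <| by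
      rw [ha, div_le_one hn']; exact_mod_cast hj
  have hint_piece : ∀ j < n, IntervalIntegrable h volume (a j) (a (j + 1)) := fun j hj =>
    hint.mono_set <| by
      rw [Set.uIcc_of_le (ha_le j), Set.uIcc_of_le zero_le_one]
      exact ha_mem j hj
  have hpiece : ∀ j < n,
      ‖(n : ℝ)⁻¹ • h (x j) - ∫ t in a j..a (j + 1), h t‖ ≤ ε * (n : ℝ)⁻¹ := by
    intro j hj
    rw [← ha_succ j, ← intervalIntegral.integral_const,
      ← intervalIntegral.integral_sub intervalIntegrable_const (hint_piece j hj)]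
    refine (intervalIntegral.norm_integral_le_of_norm_le_const fun t ht => ?_).trans_eq
      (by rw [abs_of_nonneg (sub_nonneg.2 (ha_le j))])
    rw [uIoc_of_le (ha_le j)] at ht
    have hxj : x j ∈ Icc (a j) (a (j + 1)) := by simpa [ha] using hx j hj
    refine hh _ (ha_mem j hj hxj) _ (ha_mem j hj (Ioc_subset_Icc_self ht)) ?_
    rw [abs_le, ← ha_succ j]
    constructor <;> linarith [hxj.1, hxj.2, ht.1, ht.2]
  calc ‖∑ j ∈ range n, (n : ℝ)⁻¹ • h (x j) - ∫ t in 0..1, h t‖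
      = ‖∑ j ∈ range n, ((n : ℝ)⁻¹ • h (x j) - ∫ t in a j..a (j + 1), h t)‖ := by
        rw [sum_sub_distrib, intervalIntegral.sum_integral_adjacent_intervals hint_piece]
        simp [ha, hn'.ne']
    _ ≤ ∑ _j ∈ range n, ε * (n : ℝ)⁻¹ :=
        norm_sum_le_of_le _ fun j hj => hpiece j (mem_range.1 hj)
    _ = ε := by rw [sum_const, card_range, nsmul_eq_mul]; field_simp

theorem integral_comp_nat_mul_eq_integral_sum {f : ℝ → ℝ → E}
    (hf : Continuous (Function.uncurry f)) (hper : ∀ t, Function.Periodic (f t) 1) {n : ℕ}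
    (hn : n ≠ 0) :
    ∫ t in 0..1, f t (n * t) = ∫ u in 0..1, ∑ j ∈ range n, (n : ℝ)⁻¹ • f ((u + j) / n) u := by
  have hn' : (n : ℝ) ≠ 0 := by exact_mod_cast hn
  have hterm : ∀ j : ℕ, Continuous fun u : ℝ => (n : ℝ)⁻¹ • f ((u + j) / n) u := fun j =>
    (hf.comp₂ (by fun_prop) continuous_id).const_smul _
  have hg : Continuous fun u : ℝ => f (u / n) (n * (u / n)) :=
    hf.comp₂ (by fun_prop) (by fun_prop)
  have hpiece : ∀ j : ℕ,
      ∫ u in (j : ℝ)..(j + 1 : ℕ), f (u / n) (n * (u / n)) = ∫ u in 0..1, f ((u + j) / n) u := by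
    intro j
    have h := intervalIntegral.integral_comp_add_right (a := 0) (b := 1)
      (fun u => f (u / n) (n * (u / n))) (j : ℝ)
    rw [zero_add, add_comm 1 (j : ℝ), ← Nat.cast_succ] at h
    rw [← h]
    refine intervalIntegral.integral_congr fun u _ => ?_
    rw [mul_div_cancel₀ _ hn']
    simpa using (hper _).nat_mul j u
  calc ∫ t in 0..1, f t (n * t)
      = (n : ℝ)⁻¹ • ∫ u in (0 : ℕ)..(n : ℕ), f (u / n) (n * (u / n)) := by
        rw [intervalIntegral.integral_comp_div (fun t => f t (n * t)) hn']
        simp [hn']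
    _ = ∫ u in 0..1, ∑ j ∈ range n, (n : ℝ)⁻¹ • f ((u + j) / n) u := by
        rw [← intervalIntegral.sum_integral_adjacent_intervals fun _ _ =>
            hg.intervalIntegrable _ _,
          intervalIntegral.integral_finsetSum fun j _ => (hterm j).intervalIntegrable _ _]
        simp only [hpiece, intervalIntegral.integral_smul, smul_sum]

theorem tendsto_integral_comp_nat_mul [CompleteSpace E] {f : ℝ → ℝ → E}
    (hf : Continuous (Function.uncurry f)) (hper : ∀ t, Function.Periodic (f t) 1) :
    Tendsto (fun n : ℕ => ∫ t in 0..1, f t (n * t)) atTop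
      (𝓝 (∫ s in 0..1, ∫ t in 0..1, f t s)) := by
  rw [Metric.tendsto_atTop]
  intro ε hε
  obtain ⟨δ, hδ, hf_unif⟩ := Metric.uniformContinuousOn_iff.1
    ((isCompact_Icc.prod isCompact_Icc).uniformContinuousOn_of_continuous hf.continuousOn)
    (ε / 2) (half_pos hε)
  obtain ⟨N, hN⟩ := exists_nat_gt δ⁻¹
  refine ⟨N + 1, fun n hn => ?_⟩
  have hn0 : n ≠ 0 := by omega
  have hnδ : (n : ℝ)⁻¹ < δ := by
    rw [inv_lt_comm₀ (by positivity) hδ]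
    exact hN.trans_le (by exact_mod_cast (Nat.le_succ N).trans hn)
  have hriemann : ∀ u ∈ Icc (0 : ℝ) 1,
      ‖∑ j ∈ range n, (n : ℝ)⁻¹ • f ((u + j) / n) u - ∫ t in 0..1, f t u‖ ≤ ε / 2 := by
    intro u hu
    refine norm_sum_smul_sub_integral_le (h := fun t => f t u) hn0
      ((hf.comp₂ continuous_id continuous_const).intervalIntegrable _ _)
      (fun x hx y hy hxy => ?_) fun j _ => ?_
    · rw [← dist_eq_norm]
      refine (hf_unif (x, u) ⟨hx, hu⟩ (y, u) ⟨hy, hu⟩ ?_).le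
      simpa [Prod.dist_eq, Real.dist_eq] using hxy.trans_lt hnδ
    · constructor <;> apply div_le_div_of_nonneg_right <;>
        linarith [hu.1, hu.2, Nat.cast_nonneg (α := ℝ) n]
  have hsum : Continuous fun u : ℝ => ∑ j ∈ range n, (n : ℝ)⁻¹ • f ((u + j) / n) u :=
    continuous_finsetSum _ fun j _ => (hf.comp₂ (by fun_prop) continuous_id).const_smul _
  have hinner : Continuous fun u => ∫ t in 0..1, f t u :=
    intervalIntegral.continuous_parametric_intervalIntegral_of_continuous'
      (f := fun u t => f t u) (hf.comp continuous_swap) 0 1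
  rw [dist_eq_norm, integral_comp_nat_mul_eq_integral_sum hf hper hn0,
    ← intervalIntegral.integral_sub (hsum.intervalIntegrable _ _) (hinner.intervalIntegrable _ _)]
  calc _ ≤ ε / 2 * |(1 : ℝ) - 0| :=
        intervalIntegral.norm_integral_le_of_norm_le_const fun u hu =>
          hriemann u (Ioc_subset_Icc_self (by simpa using hu))
    _ < ε := by norm_num; linarith

end Equidistribution

section UnitCircle

theorem coe_fourierChar (t : ℝ) : (𝐞 t : ℂ) = exp (2 * π * I * t) := by
  rw [Real.fourierChar_apply]; push_cast; ring_nf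

theorem fourierChar_add_one (s : ℝ) : 𝐞 (s + 1) = 𝐞 s := by
  rw [AddChar.map_add_eq_mul, Real.fourierChar_apply' 1, mul_one, Circle.exp_two_pi, mul_one]

theorem coe_fourierChar_natCast_mul (n : ℕ) (t : ℝ) : (𝐞 (n * t) : ℂ) = (𝐞 t : ℂ) ^ n := by
  rw [← nsmul_eq_mul, AddChar.map_nsmul_eq_pow, Circle.coe_pow]

theorem integral_fourierChar_eq_circleAverage {E : Type*} [NormedAddCommGroup E]
    [NormedSpace ℝ E] (g : ℂ → E) : ∫ t in 0..1, g (𝐞 t) = circleAverage g 0 1 := by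
  have hmap : ∀ t : ℝ, circleMap 0 1 (2 * π * t) = 𝐞 t := fun t => by
    rw [circleMap_zero, Real.fourierChar_apply]; push_cast; ring_nf
  have h := intervalIntegral.integral_comp_mul_left (a := 0) (b := 1)
    (fun θ => g (circleMap 0 1 θ)) (c := 2 * π) (by positivity)
  simp only [hmap, mul_zero, mul_one] at h
  rw [circleAverage_def, h]

theorem circleAverage_div_sub {r : ℂ} (hr : ‖r‖ ≠ 1) :
    circleAverage (fun z => z / (z - r)) 0 1 = if ‖r‖ < 1 then 1 else 0 := by
  have hcongr : (∮ z in C(0, 1), (z - 0)⁻¹ • (z / (z - r))) = ∮ z in C(0, 1), (z - r)⁻¹ := by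
    refine circleIntegral.integral_congr zero_le_one fun z hz => ?_
    have hz0 : z ≠ 0 := by rintro rfl; simp at hz
    simp only [sub_zero, smul_eq_mul]
    field_simp
  rw [circleAverage_eq_circleIntegral one_ne_zero, hcongr]
  split_ifs with h
  · rw [circleIntegral.integral_sub_inv_of_mem_ball (by simpa using h), smul_eq_mul,
      inv_mul_cancel₀ (by simp [Real.pi_ne_zero])]
  · have h1 : 1 < ‖r‖ := lt_of_le_of_ne (not_lt.1 h) hr.symm
    have hdiff : DifferentiableOn ℂ (fun z => (z - r)⁻¹) (closure (Metric.ball 0 1)) := by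
      rw [closure_ball 0 one_ne_zero]
      refine (differentiableOn_id.sub_const r).inv fun z hz => sub_ne_zero.2 ?_
      rintro rfl
      rw [Metric.mem_closedBall, dist_zero_right] at hz
      exact h1.not_ge hz
    rw [hdiff.diffContOnCl.circleIntegral_eq_zero zero_le_one, smul_zero]

theorem continuous_fourierChar_div_sub {r : ℂ} (hr : ‖r‖ ≠ 1) :
    Continuous fun t : ℝ => (𝐞 t : ℂ) / (𝐞 t - r) := by
  have he : Continuous fun t : ℝ => (𝐞 t : ℂ) := by fun_prop
  exact he.div (he.sub continuous_const) fun t h =>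
    hr (by rw [← sub_eq_zero.1 h, Circle.norm_coe])

theorem integral_sum_fourierChar_div_sub_eq_card (s : Multiset ℂ) (hs : ∀ r ∈ s, ‖r‖ ≠ 1) :
    ∫ t in 0..1, (s.map fun r => (𝐞 t : ℂ) / (𝐞 t - r)).sum = (s.filter (‖·‖ < 1)).card := by
  induction s using Multiset.induction_on with
  | empty => simp
  | cons r s ih =>
    have hcont : ∀ r' ∈ r ::ₘ s, Continuous fun t : ℝ => (𝐞 t : ℂ) / (𝐞 t - r') :=
      fun r' hr' => continuous_fourierChar_div_sub (hs r' hr')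
    simp only [Multiset.map_cons, Multiset.sum_cons]
    rw [intervalIntegral.integral_add
        ((hcont r (Multiset.mem_cons_self r s)).intervalIntegrable _ _)
        ((continuous_multiset_sum _ fun r' hr' =>
          hcont r' (Multiset.mem_cons_of_mem hr')).intervalIntegrable _ _),
      ih fun r' hr' => hs r' (Multiset.mem_cons_of_mem hr'),
      integral_fourierChar_eq_circleAverage (fun z => z / (z - r)),
      circleAverage_div_sub (hs r (Multiset.mem_cons_self r s)), Multiset.filter_cons]
    split_ifs <;> simp [add_comm]

theorem integral_fourierChar_mul_derivative_div_eq_card {Q : ℂ[X]}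
    (hQ : ∀ z : ℂ, ‖z‖ = 1 → Q.eval z ≠ 0) :
    ∫ t in 0..1, (𝐞 t : ℂ) * Q.derivative.eval (𝐞 t : ℂ) / Q.eval (𝐞 t : ℂ) =
      (Q.roots.filter (‖·‖ < 1)).card := by
  have hroots : ∀ r ∈ Q.roots, ‖r‖ ≠ 1 := fun r hr h1 => hQ r h1 (isRoot_of_mem_roots hr)
  rw [← integral_sum_fourierChar_div_sub_eq_card _ hroots]
  refine intervalIntegral.integral_congr fun t _ => ?_
  rw [mul_div_assoc, (IsAlgClosed.splits Q).eval_derivative_div_eval_of_ne_zero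
    (hQ _ (Circle.norm_coe _)), ← Multiset.sum_map_mul_left]
  simp only [mul_one_div]

end UnitCircle

section Bivariate

variable {R : Type*} [CommRing R]

/-- The partial derivative `∂/∂x`: `derivative` applied to every coefficient in `R[X]`. -/
noncomputable def derivX (P : R[X][Y]) : R[X][Y] :=
  PolynomialModule.equivPolynomialSelf (derivative'.mapCoeffs P)

theorem PolynomialModule.eval_eq_eval_equivPolynomialSelf (q : R[X])
    (m : PolynomialModule R[X] R[X]) :
    PolynomialModule.eval q m = (PolynomialModule.equivPolynomialSelf m).eval q := by
  induction m using PolynomialModule.induction_linear with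
  | zero => simp
  | add m m' h h' => simp [h, h']
  | single i a => simp [PolynomialModule.eval_single, mul_comm]

theorem derivative_eval_eq (P : R[X][Y]) (q : R[X]) :
    derivative (P.eval q) = (derivX P).eval q + (derivative P).eval q * derivative q := by
  simpa [derivX, PolynomialModule.eval_eq_eval_equivPolynomialSelf] using
    Derivation.apply_eval_eq derivative' q P

theorem eval_eval_eq_evalEval (P : R[X][Y]) (q : R[X]) (x : R) :
    (P.eval q).eval x = P.evalEval x (q.eval x) := by
  rw [← map_evalRingHom_eval, eval_map, ← coe_evalRingHom, ← eval₂_id, hom_eval₂]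
  rfl

theorem X_mul_derivative_eval_X_pow (P : R[X][Y]) (n : ℕ) :
    X * derivative (P.eval (X ^ n)) =
      (C X * derivX P).eval (X ^ n) + (n : R[X]) * (derivative P * Y).eval (X ^ n) := by
  have hX : X * derivative (X ^ n : R[X]) = (n : R[X]) * X ^ n := by
    rcases n with _ | n
    · simp
    · rw [derivative_X_pow, ← C_eq_natCast]; push_cast; ring
  simp only [derivative_eval_eq, eval_mul, eval_C, eval_X]
  linear_combination (eval (X ^ n) (derivative P)) * hX

theorem continuous_evalEval {R : Type*} [CommSemiring R] [TopologicalSpace R]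
    [IsTopologicalSemiring R] (A : R[X][Y]) :
    Continuous fun p : R × R => A.evalEval p.1 p.2 := by
  have h : ∀ x y : R, A.evalEval x y =
      ∑ i ∈ range (A.natDegree + 1), (A.coeff i).eval x * y ^ i := fun x y => by
    rw [evalEval, eval_eq_sum_range (p := A), eval_finsetSum]
    simp only [eval_mul, eval_pow, eval_C]
  simp only [h]
  fun_prop

variable {S : Type*} [Semiring S] [Nontrivial S]

theorem natDegree_eval_X_pow {P : S[X][Y]} {n : ℕ}
    (hn : ∀ i < P.natDegree, (P.coeff i).natDegree < n) :
    (P.eval (X ^ n)).natDegree = P.leadingCoeff.natDegree + n * P.natDegree := by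
  rcases eq_or_ne P 0 with rfl | hP
  · simp
  have hsplit : P.eval (X ^ n) = (∑ i ∈ range P.natDegree, P.coeff i * X ^ (n * i)) +
      P.leadingCoeff * X ^ (n * P.natDegree) := by
    simp only [eval_eq_sum_range, sum_range_succ, pow_mul]
    rfl
  have htop : (P.leadingCoeff * X ^ (n * P.natDegree)).natDegree =
      P.leadingCoeff.natDegree + n * P.natDegree :=
    natDegree_mul_X_pow _ (leadingCoeff_ne_zero.2 hP)
  rcases Nat.eq_zero_or_pos P.natDegree with hg | hg
  · rw [hsplit, ← htop, hg, sum_range_zero, zero_add]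
  have hlow : (∑ i ∈ range P.natDegree, P.coeff i * X ^ (n * i)).natDegree ≤
      n * P.natDegree - 1 := by
    refine natDegree_sum_le_of_forall_le _ _ fun i hi => ?_
    have hi' := mem_range.1 hi
    have hcoeff := hn i hi'
    have hmul : n * (i + 1) ≤ n * P.natDegree := Nat.mul_le_mul_left n hi'
    calc (P.coeff i * X ^ (n * i)).natDegree ≤ (P.coeff i).natDegree + n * i :=
          natDegree_mul_le.trans (Nat.add_le_add_left (natDegree_X_pow_le _) _)
      _ ≤ n * P.natDegree - 1 := by rw [Nat.mul_succ] at hmul; omega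
  have hpos : 0 < n * P.natDegree := Nat.mul_pos ((Nat.zero_le _).trans_lt (hn 0 hg)) hg
  rw [hsplit, natDegree_add_eq_right_of_natDegree_lt (by omega), htop]

theorem eventually_natDegree_eval_X_pow (P : S[X][Y]) :
    ∀ᶠ n in atTop,
      (P.eval (X ^ n)).natDegree = P.leadingCoeff.natDegree + n * P.natDegree := by
  filter_upwards [eventually_gt_atTop ((range P.natDegree).sup fun i => (P.coeff i).natDegree)]
    with n hn
  exact natDegree_eval_X_pow fun i hi =>
    (le_sup (f := fun i => (P.coeff i).natDegree) (mem_range.2 hi)).trans_lt hn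

end Bivariate

theorem tendsto_add_natCast_mul_div {𝕜 : Type*} [RCLike 𝕜] {a b : ℕ → 𝕜} {α β : 𝕜} (c : 𝕜)
    {g : 𝕜} (hg : g ≠ 0) (ha : Tendsto a atTop (𝓝 α)) (hb : Tendsto b atTop (𝓝 β)) :
    Tendsto (fun n : ℕ => (a n + n * b n) / (c + n * g)) atTop (𝓝 (β / g)) := by
  have hinv := tendsto_inv_atTop_nhds_zero_nat (𝕜 := 𝕜)
  have hlim : Tendsto (fun n : ℕ => (a n * (n : 𝕜)⁻¹ + b n) / (c * (n : 𝕜)⁻¹ + g)) atTop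
      (𝓝 ((α * 0 + β) / (c * 0 + g))) :=
    ((ha.mul hinv).add hb).div (tendsto_const_nhds.mul hinv |>.add_const g) (by simpa using hg)
  rw [mul_zero, mul_zero, zero_add, zero_add] at hlim
  refine hlim.congr' ((eventually_ne_atTop 0).mono fun n hn => ?_)
  have hn' : (n : 𝕜) ≠ 0 := Nat.cast_ne_zero.2 hn
  field_simp

section Torus

noncomputable def torusQuotient (A P : ℂ[X][Y]) (t s : ℝ) : ℂ :=
  A.evalEval (𝐞 t : ℂ) (𝐞 s) / P.evalEval (𝐞 t : ℂ) (𝐞 s)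

theorem periodic_torusQuotient (A P : ℂ[X][Y]) (t : ℝ) :
    Function.Periodic (torusQuotient A P t) 1 :=
  fun s => by rw [torusQuotient, torusQuotient, fourierChar_add_one]

variable {P : ℂ[X][Y]}

theorem continuous_torusQuotient (hP : ∀ z w : ℂ, ‖z‖ = 1 → ‖w‖ = 1 → P.evalEval z w ≠ 0)
    (A : ℂ[X][Y]) : Continuous (Function.uncurry (torusQuotient A P)) := by
  have he : Continuous fun p : ℝ × ℝ => ((𝐞 p.1 : ℂ), (𝐞 p.2 : ℂ)) := by fun_prop
  exact ((continuous_evalEval A).comp he).div ((continuous_evalEval P).comp he) fun p =>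
    hP _ _ (Circle.norm_coe _) (Circle.norm_coe _)

theorem card_roots_eval_X_pow_eq_integral
    (hP : ∀ z w : ℂ, ‖z‖ = 1 → ‖w‖ = 1 → P.evalEval z w ≠ 0) (n : ℕ) :
    (((P.eval (X ^ n)).roots.filter (‖·‖ < 1)).card : ℂ) =
      (∫ t in 0..1, torusQuotient (C X * derivX P) P t (n * t)) +
        n * ∫ t in 0..1, torusQuotient (derivative P * Y) P t (n * t) := by
  have heval : ∀ (A : ℂ[X][Y]) (t : ℝ),
      (A.eval (X ^ n)).eval (𝐞 t : ℂ) = A.evalEval (𝐞 t : ℂ) (𝐞 (n * t)) := fun A t => by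
    rw [eval_eval_eq_evalEval, eval_pow, eval_X, coe_fourierChar_natCast_mul]
  have hQ : ∀ z : ℂ, ‖z‖ = 1 → (P.eval (X ^ n)).eval z ≠ 0 := fun z hz => by
    rw [eval_eval_eq_evalEval, eval_pow, eval_X]
    exact hP z _ hz (by rw [norm_pow, hz, one_pow])
  have hint : ∀ A : ℂ[X][Y],
      IntervalIntegrable (fun t : ℝ => torusQuotient A P t (n * t)) volume 0 1 := fun A =>
    ((continuous_torusQuotient hP A).comp₂ continuous_id (by fun_prop)).intervalIntegrable _ _
  rw [← integral_fourierChar_mul_derivative_div_eq_card hQ, ← intervalIntegral.integral_const_mul,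
    ← intervalIntegral.integral_add (hint _) ((hint _).const_mul _)]
  refine intervalIntegral.integral_congr fun t _ => ?_
  have hX := congrArg (eval (𝐞 t : ℂ)) (X_mul_derivative_eval_X_pow P n)
  rw [eval_mul, eval_X, eval_add, eval_natCast_mul, heval, heval] at hX
  rw [torusQuotient, torusQuotient, hX, ← heval P, add_div, mul_div_assoc]

end Torus

theorem boyd_lawton_for_alternative_measure
    (P : Polynomial (Polynomial ℂ)) (hg : 1 ≤ P.natDegree)
    (hP : ∀ z w : ℂ, ‖z‖ = 1 → ‖w‖ = 1 →
      Polynomial.eval₂ (Polynomial.evalRingHom z) w P ≠ 0) :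
    Tendsto
      (fun n : ℕ =>
        (((((P.eval (Polynomial.X ^ n : Polynomial ℂ)).roots.filter
              fun z => ‖z‖ < 1).card : ℝ)
            / (P.eval (Polynomial.X ^ n : Polynomial ℂ)).natDegree : ℝ) : ℂ))
      atTop
      (nhds ((1 / (P.natDegree : ℂ)) *
        ∫ s in (0:ℝ)..1, ∫ t in (0:ℝ)..1,
          (Polynomial.eval₂ (Polynomial.evalRingHom (Complex.exp (2 * π * Complex.I * t)))
              (Complex.exp (2 * π * Complex.I * s)) (Polynomial.derivative P) *
            Complex.exp (2 * π * Complex.I * s)) /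
          Polynomial.eval₂ (Polynomial.evalRingHom (Complex.exp (2 * π * Complex.I * t)))
              (Complex.exp (2 * π * Complex.I * s)) P)) := by
  simp only [eval₂_evalRingHom] at hP
  have hlim := tendsto_add_natCast_mul_div (P.leadingCoeff.natDegree : ℂ)
    (Nat.cast_ne_zero.2 (by omega : P.natDegree ≠ 0))
    (tendsto_integral_comp_nat_mul (continuous_torusQuotient hP (C X * derivX P))
      (periodic_torusQuotient _ _))
    (tendsto_integral_comp_nat_mul (continuous_torusQuotient hP (derivative P * Y))
      (periodic_torusQuotient _ _))
  rw [one_div_mul_eq_div]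
  convert hlim.congr' ((eventually_natDegree_eval_X_pow P).mono fun n hn => ?_) using 3
  · simp only [eval₂_evalRingHom, ← coe_fourierChar, torusQuotient, evalEval_mul, evalEval_X]
  · rw [hn]
    push_cast
    rw [card_roots_eval_X_pow_eq_integral hP]
end

section
/- The iterated triple integral ∫_0^1 ∫_0^1 ∫_0^1 e^{2πit}/(e^{2πit} + e^{2πis} + e^{2πiu} + 1) dt ds du equals 1/4. In the notation of the paper, c(1 + x + y + z) = 1/4. -/
open Real MeasureTheory intervalIntegral
open Complex (I exp normSq)
open scoped ComplexConjugate Interval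

/-!
Substituting `z = exp (2πit)`, the innermost integral is `(2πi)⁻¹ ∮_{|z|=1} dz / (z + a)` with
`a = 1 + e^{2πis} + e^{2πiu}`: it equals `1` when `|a| < 1` and `0` when `|a| > 1`. Since
`|a|² = 1 + 8 cos(πs) cos(πu) cos(π(s - u))`, for `0 ≤ u < 1/2` the condition `|a| < 1` holds
exactly for `s ∈ (1/2, u + 1/2)` (up to finitely many `s`), so the middle integral is `u`. The
substitution `(s, u) ↦ (1 - s, 1 - u)` conjugates `a`, hence the middle integral is
`min u (1 - u)` for almost every `u ∈ [0, 1]`, and `∫₀¹ min u (1 - u) du = 1/4`.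
-/

theorem circleIntegral_sub_inv_of_notMem_closedBall {c w : ℂ} {R : ℝ} (hR : 0 ≤ R)
    (hw : w ∉ Metric.closedBall c R) : ∮ z in C(c, R), (z - w)⁻¹ = 0 :=
  DiffContOnCl.circleIntegral_eq_zero hR <|
    ((differentiableOn_id.sub_const w).inv fun _ hz ↦ sub_ne_zero.2 hz).diffContOnCl_ball
      fun _ hz hzw ↦ hw (Set.eq_of_mem_singleton hzw ▸ hz)

noncomputable def windingIntegral (a : ℂ) : ℂ :=
  ∫ t in (0 : ℝ)..1, exp (2 * π * I * t) / (exp (2 * π * I * t) + a)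

theorem windingIntegral_eq_circleIntegral (a : ℂ) :
    windingIntegral a = (2 * π * I)⁻¹ * ∮ z in C(0, 1), (z - -a)⁻¹ := by
  set f : ℝ → ℂ := fun θ ↦ exp (θ * I) / (exp (θ * I) + a)
  have hcircle : ∮ z in C(0, 1), (z - -a)⁻¹ = I * ∫ θ in (0 : ℝ)..2 * π, f θ := by
    rw [circleIntegral, ← intervalIntegral.integral_const_mul]
    congr 1 with θ
    simp only [deriv_circleMap, circleMap, f, Complex.ofReal_one, one_mul, zero_add,
      sub_neg_eq_add, smul_eq_mul]
    ring
  have hscale : windingIntegral a = (2 * π)⁻¹ • ∫ θ in (0 : ℝ)..2 * π, f θ := by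
    have h := integral_comp_mul_left f (a := 0) (b := 1) (c := 2 * π) (by positivity)
    rw [mul_zero, mul_one] at h
    rw [← h, windingIntegral]
    congr 1 with t
    simp only [f]
    push_cast
    ring_nf
  rw [hcircle, hscale, Complex.real_smul]
  push_cast
  field_simp

theorem windingIntegral_of_norm_lt_one {a : ℂ} (ha : ‖a‖ < 1) : windingIntegral a = 1 := by
  rw [windingIntegral_eq_circleIntegral, circleIntegral.integral_sub_inv_of_mem_ball (by simpa)]
  field_simp

theorem windingIntegral_of_one_lt_norm {a : ℂ} (ha : 1 < ‖a‖) : windingIntegral a = 0 := by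
  rw [windingIntegral_eq_circleIntegral,
    circleIntegral_sub_inv_of_notMem_closedBall zero_le_one (by simpa using ha), mul_zero]

theorem conj_exp_two_pi_I_mul (t : ℝ) :
    conj (exp (2 * π * I * t)) = exp (2 * π * I * ↑(1 - t)) := by
  rw [← Complex.exp_conj, Complex.ofReal_sub, Complex.ofReal_one, mul_sub, mul_one,
    Complex.exp_sub, Complex.exp_two_pi_mul_I]
  simp [Complex.exp_neg, map_ofNat]

theorem windingIntegral_conj (a : ℂ) : windingIntegral (conj a) = conj (windingIntegral a) := by
  have h := integral_comp_sub_left (a := 0) (b := 1)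
    (fun t : ℝ ↦ exp (2 * π * I * t) / (exp (2 * π * I * t) + conj a)) 1
  rw [sub_zero, sub_self] at h
  rw [windingIntegral, ← h]
  simp only [← conj_exp_two_pi_I_mul, ← map_add, ← map_div₀]
  rw [intervalIntegral_conj, windingIntegral]

theorem one_add_cos_add_cos_add_cos_sub (α β : ℝ) :
    1 + cos α + cos β + cos (α - β) = 4 * cos (α / 2) * cos (β / 2) * cos ((α - β) / 2) := by
  have h1 : cos (α - β) = 2 * cos ((α - β) / 2) ^ 2 - 1 := by
    rw [← cos_two_mul]; ring_nf
  have h2 := cos_add_cos α β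
  have h3 := cos_add_cos ((α - β) / 2) ((α + β) / 2)
  rw [show ((α - β) / 2 + (α + β) / 2) / 2 = α / 2 by ring,
    show ((α - β) / 2 - (α + β) / 2) / 2 = -(β / 2) by ring, cos_neg] at h3
  linear_combination h1 + h2 + 2 * cos ((α - β) / 2) * h3

theorem cos_pi_mul_pos {x : ℝ} (h₁ : -(1 / 2) < x) (h₂ : x < 1 / 2) : 0 < cos (π * x) :=
  cos_pos_of_mem_Ioo ⟨by nlinarith [pi_pos], by nlinarith [pi_pos]⟩

theorem cos_pi_mul_neg {x : ℝ} (h₁ : 1 / 2 < x) (h₂ : x < 3 / 2) : cos (π * x) < 0 :=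
  cos_neg_of_pi_div_two_lt_of_lt (by nlinarith [pi_pos]) (by nlinarith [pi_pos])

theorem normSq_exp_add_exp_add_one (s u : ℝ) :
    normSq (exp (2 * π * I * s) + (exp (2 * π * I * u) + 1)) =
      1 + 8 * (cos (π * s) * cos (π * u) * cos (π * (s - u))) := by
  have hexp (x : ℝ) : exp (2 * π * I * x) = cos (2 * π * x) + sin (2 * π * x) * I := by
    rw [show 2 * π * I * x = (2 * π * x : ℝ) * I by push_cast; ring, Complex.exp_mul_I,
      ← Complex.ofReal_cos, ← Complex.ofReal_sin]
  have hcos := one_add_cos_add_cos_add_cos_sub (2 * π * s) (2 * π * u)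
  rw [show 2 * π * s / 2 = π * s by ring, show 2 * π * u / 2 = π * u by ring,
    show (2 * π * s - 2 * π * u) / 2 = π * (s - u) by ring] at hcos
  rw [hexp, hexp]
  simp only [Complex.normSq_apply, Complex.add_re, Complex.add_im, Complex.mul_re,
    Complex.mul_im, Complex.I_re, Complex.I_im, Complex.ofReal_re, Complex.ofReal_im,
    Complex.one_re, Complex.one_im]
  linear_combination sin_sq_add_cos_sq (2 * π * s) + sin_sq_add_cos_sq (2 * π * u) -
    2 * cos_sub (2 * π * s) (2 * π * u) + 2 * hcos

theorem windingIntegral_exp_add_exp_add_one_of_neg {s u : ℝ}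
    (h : cos (π * s) * cos (π * u) * cos (π * (s - u)) < 0) :
    windingIntegral (exp (2 * π * I * s) + (exp (2 * π * I * u) + 1)) = 1 := by
  refine windingIntegral_of_norm_lt_one ?_
  rw [← sq_lt_one_iff₀ (norm_nonneg _), Complex.sq_norm, normSq_exp_add_exp_add_one]
  linarith

theorem windingIntegral_exp_add_exp_add_one_of_pos {s u : ℝ}
    (h : 0 < cos (π * s) * cos (π * u) * cos (π * (s - u))) :
    windingIntegral (exp (2 * π * I * s) + (exp (2 * π * I * u) + 1)) = 0 := by
  refine windingIntegral_of_one_lt_norm ?_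
  rw [← one_lt_sq_iff₀ (norm_nonneg _), Complex.sq_norm, normSq_exp_add_exp_add_one]
  linarith

theorem intervalIntegral_indicator_Ioo_one {a b c d : ℝ} (hca : c ≤ a) (hab : a ≤ b)
    (hbd : b ≤ d) : ∫ x in c..d, (Set.Ioo a b).indicator (1 : ℝ → ℂ) x = b - a := by
  rw [integral_of_le (hca.trans (hab.trans hbd)), setIntegral_indicator measurableSet_Ioo,
    Set.inter_eq_self_of_subset_right
      (Set.Ioo_subset_Ioc_self.trans (Set.Ioc_subset_Ioc hca hbd)),
    Pi.one_def, setIntegral_const, volume_real_Ioo_of_le hab, Complex.real_smul, mul_one,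
    Complex.ofReal_sub]

theorem integral_windingIntegral_of_lt_half {u : ℝ} (hu₀ : 0 ≤ u) (hu : u < 1 / 2) :
    ∫ s in (0 : ℝ)..1, windingIntegral (exp (2 * π * I * s) + (exp (2 * π * I * u) + 1)) = u := by
  have hcos_u : 0 < cos (π * u) := cos_pi_mul_pos (by linarith) hu
  have hae : ∀ᵐ s : ℝ, s ∈ Ι (0 : ℝ) 1 →
      windingIntegral (exp (2 * π * I * s) + (exp (2 * π * I * u) + 1)) =
        (Set.Ioo (1 / 2) (u + 1 / 2)).indicator 1 s := by
    filter_upwards [Measure.ae_ne volume (1 / 2), Measure.ae_ne volume (u + 1 / 2)]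
      with s hs_half hs_shift hs
    rw [Set.uIoc_of_le zero_le_one] at hs
    obtain ⟨hs₀, hs₁⟩ := hs
    rcases hs_half.lt_or_gt with hs_lt | hs_gt
    · rw [Set.indicator_of_notMem fun h ↦ h.1.not_gt hs_lt]
      have hcos_s := cos_pi_mul_pos (x := s) (by linarith) hs_lt
      have hcos_su := cos_pi_mul_pos (x := s - u) (by linarith) (by linarith)
      exact windingIntegral_exp_add_exp_add_one_of_pos (by positivity)
    have hcos_s := cos_pi_mul_neg (x := s) hs_gt (by linarith)
    rcases hs_shift.lt_or_gt with hs_lt' | hs_gt'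
    · rw [Set.indicator_of_mem (show s ∈ Set.Ioo _ _ from ⟨hs_gt, hs_lt'⟩)]
      have hcos_su := cos_pi_mul_pos (x := s - u) (by linarith) (by linarith)
      exact windingIntegral_exp_add_exp_add_one_of_neg
        (mul_neg_of_neg_of_pos (mul_neg_of_neg_of_pos hcos_s hcos_u) hcos_su)
    · rw [Set.indicator_of_notMem fun h ↦ h.2.not_gt hs_gt']
      have hcos_su := cos_pi_mul_neg (x := s - u) (by linarith) (by linarith)
      exact windingIntegral_exp_add_exp_add_one_of_pos
        (mul_pos_of_neg_of_neg (mul_neg_of_neg_of_pos hcos_s hcos_u) hcos_su)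
  rw [integral_congr_ae hae, intervalIntegral_indicator_Ioo_one (by norm_num) (by linarith)
    (by linarith)]
  push_cast
  ring

theorem integral_windingIntegral_one_sub (u : ℝ) :
    ∫ s in (0 : ℝ)..1, windingIntegral (exp (2 * π * I * s) + (exp (2 * π * I * ↑(1 - u)) + 1)) =
      conj (∫ s in (0 : ℝ)..1,
        windingIntegral (exp (2 * π * I * s) + (exp (2 * π * I * u) + 1))) := by
  have h := integral_comp_sub_left (a := 0) (b := 1)
    (fun s : ℝ ↦ windingIntegral (exp (2 * π * I * s) + (exp (2 * π * I * ↑(1 - u)) + 1))) 1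
  rw [sub_zero, sub_self] at h
  rw [← h, ← intervalIntegral_conj]
  simp only [← windingIntegral_conj, map_add, map_one, conj_exp_two_pi_I_mul]

theorem integral_windingIntegral_eq_min {u : ℝ} (hu : u ∈ Set.Icc (0 : ℝ) 1)
    (hu_half : u ≠ 1 / 2) :
    ∫ s in (0 : ℝ)..1, windingIntegral (exp (2 * π * I * s) + (exp (2 * π * I * u) + 1)) =
      ↑(min u (1 - u)) := by
  rcases hu_half.lt_or_gt with h | h
  · rw [integral_windingIntegral_of_lt_half hu.1 h, min_eq_left (by linarith)]
  · have h_symm := integral_windingIntegral_one_sub (1 - u)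
    rw [sub_sub_cancel,
      integral_windingIntegral_of_lt_half (u := 1 - u) (by linarith [hu.2]) (by linarith),
      Complex.conj_ofReal] at h_symm
    rw [h_symm, min_eq_right (by linarith)]

theorem integral_min_self_one_sub : ∫ u in (0 : ℝ)..1, min u (1 - u) = 1 / 4 := by
  have hcont : Continuous fun u : ℝ ↦ min u (1 - u) := by fun_prop
  rw [← integral_add_adjacent_intervals (hcont.intervalIntegrable 0 (1 / 2))
      (hcont.intervalIntegrable (1 / 2) 1),
    integral_congr (g := fun u ↦ u) fun u hu ↦ min_eq_left ?_,
    integral_congr (g := fun u ↦ 1 - u) fun u hu ↦ min_eq_right ?_]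
  · rw [integral_id, integral_sub intervalIntegrable_const intervalIntegral.intervalIntegrable_id,
      integral_id, intervalIntegral.integral_const]
    norm_num
  all_goals
    rw [Set.uIcc_of_le (by norm_num)] at hu
    linarith [hu.1, hu.2]

theorem c_of_one_add_x_add_y_add_z :
    (∫ u in (0:ℝ)..1, ∫ s in (0:ℝ)..1, ∫ t in (0:ℝ)..1,
        Complex.exp (2 * π * Complex.I * t) /
          (Complex.exp (2 * π * Complex.I * t) +
            Complex.exp (2 * π * Complex.I * s) +
            Complex.exp (2 * π * Complex.I * u) + 1))
      = 1 / 4 := by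
  simp only [add_assoc]
  have hae : ∀ᵐ u : ℝ, u ∈ Ι (0 : ℝ) 1 →
      ∫ s in (0 : ℝ)..1, windingIntegral (exp (2 * π * I * s) + (exp (2 * π * I * u) + 1)) =
        ↑(min u (1 - u)) := by
    filter_upwards [Measure.ae_ne volume (1 / 2)] with u hu_half hu
    rw [Set.uIoc_of_le zero_le_one] at hu
    exact integral_windingIntegral_eq_min (Set.Ioc_subset_Icc_self hu) hu_half
  calc _ = ∫ u in (0 : ℝ)..1, ((min u (1 - u) : ℝ) : ℂ) := integral_congr_ae hae
    _ = 1 / 4 := by rw [intervalIntegral.integral_ofReal, integral_min_self_one_sub]; norm_num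
end
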